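/- arXiv:1606.05235 — 4 statements merged into one kernel-verified Lean document; each statement's English description precedes it below -/
import Mathlib

section
/- Let C_0 = {(log|z_1|,…,log|z_n|) : |z_1|² + ⋯ + |z_n|² < 1} ⊂ ℝⁿ and let f be a convex function on C_0 increasing in each variable (extended by +∞ outside C_0). Fix a ∈ C_0 and define f̂(w) := lim_{t→+∞} f(a + tw)/t for w ∈ ℝⁿ_{≤0} \ {0}, and the Newton convex body Γ(f) := {λ ∈ ℝⁿ : ⟨λ, ·⟩ ≤ f + O(1) on C_0}. Then the closure of Γ(f) equals Γ(f̂), which equals the set {λ ∈ ℝⁿ : ⟨λ, w⟩ ≤ f̂(w) for all w}. -/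
/-!
Along a ray `a + t • w` of `C₀` (`w ≤ 0`), the bound `⟨λ, a + t • w⟩ ≤ f (a + t • w) + C` divided
by `t` gives `⟨λ, w⟩ ≤ f̂ w` in the limit, so `Γ(f)` lies in the closed set
`{λ | ∀ w, ⟨λ, w⟩ ≤ f̂ w}`. Conversely a subgradient of `f` at `a + t • w` lies in `Γ(f)` and pairs
with `w` to at least `(f (a + t • w) - f a) / t`, so `f̂ w = sup_{λ ∈ Γ(f)} ⟨λ, w⟩`. A functional
`⟨·, w⟩` separating a point from `Γ(f)` is bounded above on `Γ(f)`, which is stable under adding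
nonnegative vectors because `C₀` lies in the nonpositive orthant; hence `w ≤ 0`, `w ≠ 0`, and the
separation contradicts that supremum formula. Finally `f̂` is positively homogeneous, so the
constant `C` in `Γ(f̂)` can be scaled away.
-/

open Filter MeasureTheory Metric Set
open scoped ENNReal Topology

noncomputable section

/-- The logarithmic image of the unit ball:
`C₀ = {(log|z₁|,…,log|zₙ|) : Σ|zᵢ|² < 1} = {x : Σ e^{2xᵢ} < 1}`. -/
def C0 (n : ℕ) : Set (Fin n → ℝ) := {x | ∑ i, Real.exp (2 * x i) < 1}

theorem isOpen_C0 (n : ℕ) : IsOpen (C0 n) := isOpen_lt (by fun_prop) continuous_const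

theorem isLowerSet_C0 (n : ℕ) : IsLowerSet (C0 n) := fun _ _ hyx hx =>
  (Finset.sum_le_sum fun i _ => Real.exp_le_exp.2 (by linarith [hyx i])).trans_lt hx

theorem C0_subset_Iic_zero (n : ℕ) : C0 n ⊆ Iic 0 := fun x hx i => by
  show x i ≤ 0
  have := (Finset.single_le_sum (fun j _ => (Real.exp_pos (2 * x j)).le)
    (Finset.mem_univ i)).trans_lt hx
  linarith [Real.exp_lt_one_iff.1 this]

theorem ConvexOn.exists_subgradient {E : Type*} [NormedAddCommGroup E] [NormedSpace ℝ E]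
    [FiniteDimensional ℝ E] {s : Set E} {f : E → ℝ} (hf : ConvexOn ℝ s f) (hs : IsOpen s)
    {x₀ : E} (hx₀ : x₀ ∈ s) : ∃ g : E →L[ℝ] ℝ, ∀ x ∈ s, f x₀ + g (x - x₀) ≤ f x := by
  set S : Set (E × ℝ) := {p | p.1 ∈ s ∧ f p.1 < p.2}
  have hS : IsOpen S :=
    ((hf.continuousOn hs).comp continuousOn_fst fun _ hp => hp).prodMk continuousOn_snd
      |>.isOpen_inter_preimage (hs.preimage continuous_fst) (isOpen_lt continuous_fst continuous_snd)
  obtain ⟨F, hF⟩ := geometric_hahn_banach_open_point hf.convex_strict_epigraph hS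
    (x := (x₀, f x₀)) fun h => lt_irrefl _ h.2
  set G := F.comp (.inl ℝ E ℝ)
  set β := F (0, 1)
  have hFG (x : E) (r : ℝ) : F (x, r) = G x + r * β := by
    rw [show ((x, r) : E × ℝ) = (x, 0) + r • (0, 1) by simp, map_add, map_smul, smul_eq_mul]
    rfl
  have hβ : β < 0 := by
    have := hF (x₀, f x₀ + 1) ⟨hx₀, lt_add_one _⟩
    rw [hFG, hFG] at this
    linarith
  have hsep : ∀ x ∈ s, G x + f x * β ≤ G x₀ + f x₀ * β := by
    intro x hx
    refine le_of_forall_pos_lt_add fun ε hε => ?_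
    have := hF (x, f x + ε / -β) ⟨hx, lt_add_of_pos_right _ (div_pos hε (neg_pos.2 hβ))⟩
    rw [hFG, hFG, add_mul, div_mul_eq_mul_div, div_neg, mul_div_cancel_right₀ _ hβ.ne] at this
    linarith
  refine ⟨(-β)⁻¹ • G, fun x hx => ?_⟩
  rw [smul_apply, map_sub, smul_eq_mul, ← le_sub_iff_add_le', inv_mul_le_iff₀ (neg_pos.2 hβ)]
  linarith [hsep x hx]

theorem tendsto_smul_smul_div_atTop {E : Type*} [AddCommGroup E] [Module ℝ E] {φ : E → ℝ}
    {w : E} {c r : ℝ} (h : Tendsto (fun t : ℝ => φ (t • w) / t) atTop (𝓝 c)) (hr : 0 < r) :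
    Tendsto (fun t : ℝ => φ (t • r • w) / t) atTop (𝓝 (r * c)) := by
  refine ((h.comp (tendsto_id.atTop_mul_const hr)).const_mul r).congr' ?_
  filter_upwards [eventually_gt_atTop 0] with t ht
  simp only [Function.comp_apply, id, smul_smul]
  field_simp

section NewtonBody

variable {ι : Type*} [Fintype ι]

theorem LinearMap.exists_dotProduct_eq (g : (ι → ℝ) →ₗ[ℝ] ℝ) : ∃ v : ι → ℝ, ∀ x, v ⬝ᵥ x = g x := by
  classical
  exact ⟨(dotProductEquiv ℝ ι).symm g,
    LinearMap.congr_fun ((dotProductEquiv ℝ ι).apply_symm_apply g)⟩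

def newtonBody (s : Set (ι → ℝ)) (f : (ι → ℝ) → ℝ) : Set (ι → ℝ) :=
  {l | ∃ C, ∀ x ∈ s, l ⬝ᵥ x ≤ f x + C}

variable {s : Set (ι → ℝ)} {f : (ι → ℝ) → ℝ}

theorem convex_newtonBody : Convex ℝ (newtonBody s f) := by
  rintro l₁ ⟨C₁, h₁⟩ l₂ ⟨C₂, h₂⟩ α β hα hβ hαβ
  refine ⟨α * C₁ + β * C₂, fun x hx => ?_⟩
  have := add_le_add (mul_le_mul_of_nonneg_left (h₁ x hx) hα)
    (mul_le_mul_of_nonneg_left (h₂ x hx) hβ)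
  rw [add_dotProduct, smul_dotProduct, smul_dotProduct, smul_eq_mul, smul_eq_mul]
  linear_combination this + f x * hαβ

theorem add_mem_newtonBody (hs : s ⊆ Iic 0) {l m : ι → ℝ} (hl : l ∈ newtonBody s f)
    (hm : 0 ≤ m) : l + m ∈ newtonBody s f := by
  obtain ⟨C, hC⟩ := hl
  refine ⟨C, fun x hx => ?_⟩
  have : m ⬝ᵥ x ≤ 0 := Finset.sum_nonpos fun i _ => mul_nonpos_of_nonneg_of_nonpos (hm i) (hs hx i)
  rw [add_dotProduct]
  linarith [hC x hx]

theorem mem_newtonBody_of_subgradient {l x₀ : ι → ℝ} (h : ∀ x ∈ s, f x₀ + l ⬝ᵥ (x - x₀) ≤ f x) :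
    l ∈ newtonBody s f :=
  ⟨l ⬝ᵥ x₀ - f x₀, fun x hx => by linarith [h x hx, dotProduct_sub l x x₀]⟩

theorem ConvexOn.exists_subgradient_mem_newtonBody (hf : ConvexOn ℝ s f) (hs : IsOpen s)
    {x₀ : ι → ℝ} (hx₀ : x₀ ∈ s) :
    ∃ l ∈ newtonBody s f, ∀ x ∈ s, f x₀ + l ⬝ᵥ (x - x₀) ≤ f x := by
  obtain ⟨g, hg⟩ := hf.exists_subgradient hs hx₀
  obtain ⟨l, hl⟩ := g.toLinearMap.exists_dotProduct_eq
  have hsub : ∀ x ∈ s, f x₀ + l ⬝ᵥ (x - x₀) ≤ f x := fun x hx => (hl _).symm ▸ hg x hx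
  exact ⟨l, mem_newtonBody_of_subgradient hsub, hsub⟩

theorem dotProduct_le_of_mem_newtonBody {l a w : ι → ℝ} {c : ℝ} (hl : l ∈ newtonBody s f)
    (hs : ∀ᶠ t : ℝ in atTop, a + t • w ∈ s)
    (hc : Tendsto (fun t : ℝ => f (a + t • w) / t) atTop (𝓝 c)) : l ⬝ᵥ w ≤ c := by
  obtain ⟨C, hC⟩ := hl
  have hlim : Tendsto (fun t : ℝ => f (a + t • w) / t + (C - l ⬝ᵥ a) / t) atTop (𝓝 c) := by
    simpa using hc.add (tendsto_const_nhds.div_atTop tendsto_id)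
  refine ge_of_tendsto hlim ?_
  filter_upwards [hs, eventually_gt_atTop 0] with t hts ht
  have := hC _ hts
  rw [dotProduct_add, dotProduct_smul, smul_eq_mul] at this
  rw [← add_div, le_div_iff₀ ht]
  linarith

theorem exists_mem_newtonBody_lt_dotProduct (hf : ConvexOn ℝ s f) (hs : IsOpen s)
    {a w : ι → ℝ} {c c' : ℝ} (ha : a ∈ s) (hsw : ∀ t : ℝ, 0 ≤ t → a + t • w ∈ s)
    (hc : Tendsto (fun t : ℝ => f (a + t • w) / t) atTop (𝓝 c)) (hc' : c' < c) :
    ∃ l ∈ newtonBody s f, c' < l ⬝ᵥ w := by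
  have hlim : Tendsto (fun t : ℝ => (f (a + t • w) - f a) / t) atTop (𝓝 c) := by
    simpa [sub_div] using hc.sub (tendsto_const_nhds.div_atTop tendsto_id)
  obtain ⟨t, hct, ht⟩ := ((hlim.eventually (lt_mem_nhds hc')).and (eventually_gt_atTop 0)).exists
  obtain ⟨l, hl, hsub⟩ := hf.exists_subgradient_mem_newtonBody hs (hsw t ht.le)
  refine ⟨l, hl, hct.trans_le ?_⟩
  have := hsub a ha
  rw [sub_add_cancel_left, dotProduct_neg, dotProduct_smul, smul_eq_mul] at this
  rw [div_le_iff₀ ht]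
  linarith

theorem isClosed_setOf_forall_dotProduct_le (K : Set (ι → ℝ)) (g : (ι → ℝ) → ℝ) :
    IsClosed {l | ∀ w ∈ K, l ⬝ᵥ w ≤ g w} := by
  simp only [ofPred_forall]
  exact isClosed_biInter fun w _ =>
    isClosed_le (continuous_finsetSum _ fun i _ => (continuous_apply i).mul continuous_const)
      continuous_const

theorem newtonBody_eq_of_homogeneous {K : Set (ι → ℝ)} {g : (ι → ℝ) → ℝ}
    (hK : ∀ w ∈ K, ∀ r : ℝ, 0 < r → r • w ∈ K)
    (hg : ∀ w ∈ K, ∀ r : ℝ, 0 < r → g (r • w) = r * g w) :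
    newtonBody K g = {l | ∀ w ∈ K, l ⬝ᵥ w ≤ g w} := by
  refine Subset.antisymm ?_ fun l hl => ⟨0, by simpa using hl⟩
  rintro l ⟨C, hC⟩ w hw
  have hlim : Tendsto (fun r : ℝ => g w + C / r) atTop (𝓝 (g w)) := by
    simpa using tendsto_const_nhds.add ((tendsto_const_nhds (x := C)).div_atTop tendsto_id)
  refine ge_of_tendsto hlim ?_
  filter_upwards [eventually_gt_atTop 0] with r hr
  have := hC _ (hK w hw r hr)
  rw [dotProduct_smul, smul_eq_mul, hg w hw r hr] at this
  rw [← sub_le_iff_le_add', le_div_iff₀ hr]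
  linarith

theorem nonpos_of_forall_dotProduct_le (hs : s ⊆ Iic 0) {w : ι → ℝ} {u : ℝ}
    (hne : (newtonBody s f).Nonempty) (hw : ∀ l ∈ newtonBody s f, w ⬝ᵥ l ≤ u) : w ≤ 0 := by
  classical
  obtain ⟨l, hl⟩ := hne
  intro i
  have hbound (t : ℝ) (ht : 0 ≤ t) : w ⬝ᵥ l + w i * t ≤ u := by
    rw [← dotProduct_single, ← dotProduct_add]
    exact hw _ (add_mem_newtonBody hs hl (Pi.single_nonneg.2 ht))
  by_contra! hi
  have h₀ := hbound 0 le_rfl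
  have := hbound ((u - w ⬝ᵥ l + 1) / w i) (div_nonneg (by linarith) hi.le)
  rw [mul_div_cancel₀ _ hi.ne'] at this
  linarith

theorem closure_newtonBody_eq_of_tendsto (hf : ConvexOn ℝ s f) (hs : IsOpen s)
    (hsl : IsLowerSet s) (hs0 : s ⊆ Iic 0) {a : ι → ℝ} (ha : a ∈ s) {g : (ι → ℝ) → ℝ}
    (hg : ∀ w ∈ Iic 0 \ {0}, Tendsto (fun t : ℝ => f (a + t • w) / t) atTop (𝓝 (g w))) :
    closure (newtonBody s f) = {l | ∀ w ∈ Iic 0 \ {0}, l ⬝ᵥ w ≤ g w} := by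
  have hray (w : ι → ℝ) (hw : w ≤ 0) (t : ℝ) (ht : 0 ≤ t) : a + t • w ∈ s :=
    hsl ((add_le_iff_nonpos_right a).2 (smul_nonpos_of_nonneg_of_nonpos ht hw)) ha
  refine (closure_minimal (fun l hl w hw => ?_) (isClosed_setOf_forall_dotProduct_le _ g)).antisymm
    fun l hl => by_contra fun hcl => ?_
  · exact dotProduct_le_of_mem_newtonBody hl ((eventually_ge_atTop 0).mono (hray w hw.1)) (hg w hw)
  obtain ⟨F, u, hFu, huF⟩ :=
    geometric_hahn_banach_closed_point convex_newtonBody.closure isClosed_closure hcl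
  obtain ⟨w, hw⟩ : ∃ w : ι → ℝ, ∀ x, w ⬝ᵥ x = F x := F.toLinearMap.exists_dotProduct_eq
  have hbdd (l' : ι → ℝ) (hl' : l' ∈ newtonBody s f) : w ⬝ᵥ l' < u :=
    (hw l').symm ▸ hFu l' (subset_closure hl')
  obtain ⟨l₀, hl₀, -⟩ := hf.exists_subgradient_mem_newtonBody hs ha
  have hw0 : w ≤ 0 := nonpos_of_forall_dotProduct_le hs0 ⟨l₀, hl₀⟩ fun l' hl' => (hbdd l' hl').le
  have hwne : w ≠ 0 := by
    rintro rfl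
    linarith [hbdd l₀ hl₀, zero_dotProduct l₀, zero_dotProduct l, hw l]
  have hug : u < g w := by
    linarith [hw l, dotProduct_comm w l, hl w ⟨hw0, hwne⟩]
  obtain ⟨l', hl', hlt⟩ :=
    exists_mem_newtonBody_lt_dotProduct hf hs ha (hray w hw0) (hg w ⟨hw0, hwne⟩) hug
  linarith [hbdd l' hl', dotProduct_comm w l']

end NewtonBody

theorem closure_newtonBody_eq_general (n : ℕ) (f : (Fin n → ℝ) → ℝ) (fhat : (Fin n → ℝ) → ℝ)
    (hconv : ConvexOn ℝ (C0 n) f)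
    (a : Fin n → ℝ) (ha : a ∈ C0 n)
    (hfhat : ∀ w : Fin n → ℝ, (∀ i, w i ≤ 0) → w ≠ 0 →
      Tendsto (fun t : ℝ => f (a + t • w) / t) atTop (𝓝 (fhat w))) :
    closure {l : Fin n → ℝ | ∃ C : ℝ, ∀ x ∈ C0 n, ∑ i, l i * x i ≤ f x + C}
        = {l : Fin n → ℝ | ∃ C : ℝ, ∀ w : Fin n → ℝ, (∀ i, w i ≤ 0) → w ≠ 0 →
            ∑ i, l i * w i ≤ fhat w + C} ∧
      {l : Fin n → ℝ | ∃ C : ℝ, ∀ w : Fin n → ℝ, (∀ i, w i ≤ 0) → w ≠ 0 →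
            ∑ i, l i * w i ≤ fhat w + C}
        = {l : Fin n → ℝ | ∀ w : Fin n → ℝ, (∀ i, w i ≤ 0) → w ≠ 0 →
            ∑ i, l i * w i ≤ fhat w} := by
  have hfhat' (w) (hw : w ∈ Iic (0 : Fin n → ℝ) \ {0}) := hfhat w hw.1 hw.2
  have hcone (w) (hw : w ∈ Iic (0 : Fin n → ℝ) \ {0}) (r : ℝ) (hr : 0 < r) :
      r • w ∈ Iic (0 : Fin n → ℝ) \ {0} :=
    ⟨mem_Iic.2 (smul_nonpos_of_nonneg_of_nonpos hr.le hw.1), smul_ne_zero hr.ne' hw.2⟩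
  have hhom (w) (hw : w ∈ Iic (0 : Fin n → ℝ) \ {0}) (r : ℝ) (hr : 0 < r) :
      fhat (r • w) = r * fhat w :=
    tendsto_nhds_unique (hfhat' _ (hcone w hw r hr))
      (tendsto_smul_smul_div_atTop (φ := fun v => f (a + v)) (hfhat' w hw) hr)
  have hclosure := closure_newtonBody_eq_of_tendsto hconv (isOpen_C0 n) (isLowerSet_C0 n)
    (C0_subset_Iic_zero n) ha hfhat'
  have hbody := newtonBody_eq_of_homogeneous hcone hhom
  simp only [newtonBody, Set.mem_sdiff, mem_Iic, mem_singleton_iff, and_imp] at hclosure hbody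
  exact ⟨hclosure.trans hbody.symm, hbody⟩

/-- Guedj, Lemma 1.19. For a convex function `f` on `C₀` increasing in each
variable, with slope-at-infinity function `f̂(w) = lim_{t→∞} f(a+tw)/t` (for `w ≤ 0`, `w ≠ 0`),
the closure of the Newton convex body `Γ(f) = {λ : ⟨λ,·⟩ ≤ f + O(1)}` equals
`Γ(f̂) = {λ : ⟨λ,·⟩ ≤ f̂ + O(1)}`, which equals `{λ : ⟨λ,w⟩ ≤ f̂(w) for all w}`. -/
theorem closure_newtonBody_eq (n : ℕ) (f : (Fin n → ℝ) → ℝ) (fhat : (Fin n → ℝ) → ℝ)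
    (hconv : ConvexOn ℝ (C0 n) f)
    (hmono : ∀ x ∈ C0 n, ∀ y ∈ C0 n, (∀ i, x i ≤ y i) → f x ≤ f y)
    (a : Fin n → ℝ) (ha : a ∈ C0 n)
    (hfhat : ∀ w : Fin n → ℝ, (∀ i, w i ≤ 0) → w ≠ 0 →
      Tendsto (fun t : ℝ => f (a + t • w) / t) atTop (𝓝 (fhat w))) :
    closure {l : Fin n → ℝ | ∃ C : ℝ, ∀ x ∈ C0 n, ∑ i, l i * x i ≤ f x + C}
        = {l : Fin n → ℝ | ∃ C : ℝ, ∀ w : Fin n → ℝ, (∀ i, w i ≤ 0) → w ≠ 0 →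
            ∑ i, l i * w i ≤ fhat w + C} ∧
      {l : Fin n → ℝ | ∃ C : ℝ, ∀ w : Fin n → ℝ, (∀ i, w i ≤ 0) → w ≠ 0 →
            ∑ i, l i * w i ≤ fhat w + C}
        = {l : Fin n → ℝ | ∀ w : Fin n → ℝ, (∀ i, w i ≤ 0) → w ≠ 0 →
            ∑ i, l i * w i ≤ fhat w} :=
  closure_newtonBody_eq_general n f fhat hconv a ha hfhat

end
end

section
/- Let C_0 = {(log|z_1|,…,log|z_n|) : |z_1|² + ⋯ + |z_n|² < 1} ⊂ ℝⁿ and let f, g be convex functions on C_0 increasing in each variable with f = g = 0 on ∂C_0. Assume that for each a ∈ C_0 and each b ∈ ℕⁿ (with strictly positive entries) one has lim_{t→−∞} f(a+tb)/t ≥ lim_{t→−∞} g(a+tb)/t. Then the closure of the Newton convex body of f is contained in that of g: cl Γ(f) ⊂ cl Γ(g). -/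
open Filter MeasureTheory Metric Set
open scoped ENNReal Topology

noncomputable section

/-- The slope at infinity of `h` along the ray `t ↦ a + t b`, `t → -∞`
(for convex `h` the `limsup` is an honest limit). -/
def raySlope (n : ℕ) (h : (Fin n → ℝ) → ℝ) (a b : Fin n → ℝ) : EReal :=
  Filter.limsup (fun t : ℝ => ((h (a + t • b) / t : ℝ) : EReal)) atBot

namespace NB

variable {n : ℕ}

lemma mem_C0_mono {x y : Fin n → ℝ} (hx : x ∈ C0 n) (h : ∀ i, y i ≤ x i) : y ∈ C0 n := by
  have hle : ∑ i, Real.exp (2 * y i) ≤ ∑ i, Real.exp (2 * x i) :=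
    Finset.sum_le_sum fun i _ => Real.exp_le_exp.2 (by linarith [h i])
  exact lt_of_le_of_lt hle hx

lemma coord_neg {x : Fin n → ℝ} (hx : x ∈ C0 n) (i : Fin n) : x i < 0 := by
  have h1 : Real.exp (2 * x i) < 1 := by
    refine lt_of_le_of_lt ?_ hx
    exact Finset.single_le_sum (f := fun j => Real.exp (2 * x j))
      (fun j _ => (Real.exp_pos _).le) (Finset.mem_univ i)
  have := Real.exp_lt_one_iff.1 h1
  linarith

lemma isOpen_C0 : IsOpen (C0 n) := by
  have hc : Continuous fun x : Fin n → ℝ => ∑ i, Real.exp (2 * x i) :=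
    continuous_finset_sum _ fun i _ =>
      Real.continuous_exp.comp (continuous_const.mul (continuous_apply i))
  exact isOpen_lt hc continuous_const

lemma convex_C0 : Convex ℝ (C0 n) := by
  intro x hx y hy a b ha hb hab
  show ∑ i, Real.exp (2 * (a • x + b • y) i) < 1
  have hterm : ∀ i, Real.exp (2 * (a • x + b • y) i)
      ≤ a * Real.exp (2 * x i) + b * Real.exp (2 * y i) := by
    intro i
    have h := convexOn_exp.2 (Set.mem_univ (2 * x i)) (Set.mem_univ (2 * y i)) ha hb hab
    simp only [smul_eq_mul] at h
    have : (2 : ℝ) * (a • x + b • y) i = a * (2 * x i) + b * (2 * y i) := by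
      simp [Pi.add_apply, Pi.smul_apply, smul_eq_mul]; ring
    rw [this]
    exact h
  refine lt_of_le_of_lt (Finset.sum_le_sum fun i _ => hterm i) ?_
  rw [Finset.sum_add_distrib, ← Finset.mul_sum, ← Finset.mul_sum]
  rcases eq_or_lt_of_le ha with h | h
  · have hb1 : b = 1 := by linarith
    subst hb1
    simp only [← h, zero_mul, zero_add, one_mul]
    exact hy
  · have h1 : a * (∑ i, Real.exp (2 * x i)) < a := by
      calc a * (∑ i, Real.exp (2 * x i)) < a * 1 := by exact (mul_lt_mul_iff_right₀ h).2 hx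
      _ = a := mul_one a
    have h2 : b * (∑ i, Real.exp (2 * y i)) ≤ b := by
      calc b * (∑ i, Real.exp (2 * y i)) ≤ b * 1 :=
        mul_le_mul_of_nonneg_left hy.le hb
      _ = b := mul_one b
    linarith

/-- base point -/
def a0 (n : ℕ) : Fin n → ℝ := fun _ => -((n : ℝ) + 1)

lemma a0_mem : a0 n ∈ C0 n := by
  show ∑ _i : Fin n, Real.exp (2 * -((n : ℝ) + 1)) < 1
  rw [Finset.sum_const, Finset.card_univ, Fintype.card_fin, nsmul_eq_mul]
  have he : Real.exp (2 * -((n : ℝ) + 1)) = (Real.exp (2 * ((n : ℝ) + 1)))⁻¹ := by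
    rw [← Real.exp_neg]; ring_nf
  rw [he, ← div_eq_mul_inv, div_lt_one (Real.exp_pos _)]
  have h := Real.add_one_le_exp (2 * ((n : ℝ) + 1))
  have : (n : ℝ) ≥ 0 := Nat.cast_nonneg n
  linarith

/-- A function increasing in each variable with boundary value 0 is `≤ 0` on `C0`. -/
lemma nonpos_on (hn : 0 < n) {h : (Fin n → ℝ) → ℝ}
    (hmono : ∀ x ∈ C0 n, ∀ y ∈ C0 n, (∀ i, x i ≤ y i) → h x ≤ h y)
    (hbd : ∀ x ∈ frontier (C0 n), Tendsto h (𝓝[C0 n] x) (𝓝 (0 : ℝ)))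
    {x : Fin n → ℝ} (hx : x ∈ C0 n) : h x ≤ 0 := by
  set S : ℝ := ∑ i, Real.exp (2 * x i) with hS
  have hS0 : 0 < S := by
    refine Finset.sum_pos (fun i _ => Real.exp_pos _) ?_
    exact ⟨⟨0, hn⟩, Finset.mem_univ _⟩
  have hS1 : S < 1 := hx
  set t₀ : ℝ := -Real.log S / 2 with ht₀def
  have ht₀ : 0 < t₀ := by
    have := Real.log_neg hS0 hS1
    simp only [ht₀def]; linarith
  set p : ℝ → (Fin n → ℝ) := fun t => fun i => x i + t with hpdef
  have hsum : ∀ t : ℝ, (∑ i, Real.exp (2 * (p t) i)) = Real.exp (2 * t) * S := by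
    intro t
    rw [hS, Finset.mul_sum]
    refine Finset.sum_congr rfl fun i _ => ?_
    rw [← Real.exp_add]
    congr 1
    simp only [hpdef]; ring
  have hkey : ∀ t : ℝ, p t ∈ C0 n ↔ t < t₀ := by
    intro t
    have : p t ∈ C0 n ↔ Real.exp (2 * t) * S < 1 := by
      constructor
      · intro hmem; rw [← hsum t]; exact hmem
      · intro hlt; show (∑ i, Real.exp (2 * (p t) i)) < 1; rw [hsum t]; exact hlt
    rw [this]
    rw [mul_comm, ← lt_div_iff₀ (Real.exp_pos _)]
    rw [div_eq_mul_inv, one_mul, ← Real.exp_neg]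
    constructor
    · intro hlt
      have := Real.log_lt_log hS0 hlt
      rw [Real.log_exp] at this
      simp only [ht₀def]; linarith
    · intro hlt
      have h2 : Real.log S < -(2*t) := by simp only [ht₀def] at hlt; linarith
      calc S = Real.exp (Real.log S) := (Real.exp_log hS0).symm
      _ < Real.exp (-(2*t)) := Real.exp_lt_exp.2 h2
  set y : Fin n → ℝ := p t₀ with hydef
  have hyfr : y ∈ frontier (C0 n) := by
    rw [frontier, isOpen_C0.interior_eq]
    constructor
    · have htend : Tendsto p (𝓝[<] t₀) (𝓝 y) := by
        have hc : Continuous p := continuous_pi fun i => continuous_const.add continuous_id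
        exact (hc.tendsto t₀).mono_left nhdsWithin_le_nhds
      refine mem_closure_of_tendsto htend ?_
      filter_upwards [self_mem_nhdsWithin] with t ht
      exact (hkey t).2 ht
    · intro hy
      exact absurd ((hkey t₀).1 hy) (lt_irrefl t₀)
  have htendg : Tendsto (h ∘ p) (𝓝[<] t₀) (𝓝 (0 : ℝ)) := by
    refine (hbd y hyfr).comp ?_
    refine tendsto_nhdsWithin_of_tendsto_nhds_of_eventually_within _ ?_ ?_
    · have hc : Continuous p := continuous_pi fun i => continuous_const.add continuous_id
      exact (hc.tendsto t₀).mono_left nhdsWithin_le_nhds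
    · filter_upwards [self_mem_nhdsWithin] with t ht
      exact (hkey t).2 ht
  have hev : ∀ᶠ t in 𝓝[<] t₀, h x ≤ (h ∘ p) t := by
    filter_upwards [Ioo_mem_nhdsLT_of_mem (show t₀ ∈ Set.Ioc 0 t₀ from ⟨ht₀, le_refl _⟩)]
      with t ht
    exact hmono x hx (p t) ((hkey t).2 ht.2) (fun i => by simp only [hpdef]; linarith [ht.1])
  exact ge_of_tendsto htendg hev

/-- Elements of the Newton body are componentwise nonnegative. -/
lemma gamma_nonneg {h : (Fin n → ℝ) → ℝ}
    (hnonpos : ∀ x ∈ C0 n, h x ≤ 0) {m : Fin n → ℝ} {C : ℝ}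
    (hm : ∀ x ∈ C0 n, ∑ i, m i * x i ≤ h x + C) (i : Fin n) : 0 ≤ m i := by
  by_contra hneg
  push_neg at hneg
  set A : ℝ := ∑ j, m j * a0 n j with hA
  set t : ℝ := min 0 ((C + 1 - A) / m i) with htdef
  have ht0 : t ≤ 0 := min_le_left _ _
  set xt : Fin n → ℝ := fun j => a0 n j + if j = i then t else 0 with hxt
  have hxtmem : xt ∈ C0 n := by
    refine mem_C0_mono a0_mem fun j => ?_
    simp only [hxt]
    split <;> linarith
  have hsum : ∑ j, m j * xt j = A + m i * t := by
    simp only [hxt, mul_add, Finset.sum_add_distrib, ← hA]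
    congr 1
    rw [show (∑ j, m j * (if j = i then t else 0)) = ∑ j, (if j = i then m j * t else 0) by
      refine Finset.sum_congr rfl fun j _ => ?_; split <;> simp]
    rw [Finset.sum_ite_eq' Finset.univ i (fun j => m j * t)]
    simp
  have hle : A + m i * t ≤ C := by
    have h1 := hm xt hxtmem
    rw [hsum] at h1
    linarith [hnonpos xt hxtmem]
  have hmt : C + 1 - A ≤ m i * t := by
    have h1 : t ≤ (C + 1 - A) / m i := min_le_right _ _
    have h2 : m i * ((C + 1 - A) / m i) ≤ m i * t := mul_le_mul_of_nonpos_left h1 hneg.le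
    rw [mul_div_cancel₀ _ (ne_of_lt hneg)] at h2
    exact h2
  linarith

/-- Existence of a subgradient for a convex function at an interior point. -/
lemma exists_subgradient {h : (Fin n → ℝ) → ℝ} (hconv : ConvexOn ℝ (C0 n) h)
    {p : Fin n → ℝ} (hp : p ∈ C0 n) :
    ∃ m : Fin n → ℝ, ∀ x ∈ C0 n, h p + ∑ i, m i * (x i - p i) ≤ h x := by
  classical
  set S : Set ((Fin n → ℝ) × ℝ) := {z | z.1 ∈ C0 n ∧ h z.1 < z.2} with hSdef
  have hScvx : Convex ℝ S := by
    rintro z1 ⟨hz1, hz1'⟩ z2 ⟨hz2, hz2'⟩ a b ha hb hab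
    refine ⟨convex_C0 hz1 hz2 ha hb hab, ?_⟩
    have hc := hconv.2 hz1 hz2 ha hb hab
    have h2 : a * h z1.1 + b * h z2.1 < a * z1.2 + b * z2.2 := by
      rcases eq_or_lt_of_le ha with h0 | h0
      · have hb1 : b = 1 := by linarith
        simp only [← h0, zero_mul, zero_add, hb1, one_mul]
        exact hz2'
      · have e1 : a * h z1.1 < a * z1.2 := (mul_lt_mul_iff_right₀ h0).2 hz1'
        have e2 : b * h z2.1 ≤ b * z2.2 := mul_le_mul_of_nonneg_left hz2'.le hb
        linarith
    calc h ((a • z1 + b • z2).1) = h (a • z1.1 + b • z2.1) := by rfl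
    _ ≤ a * h z1.1 + b * h z2.1 := by simpa using hc
    _ < a * z1.2 + b * z2.2 := h2
    _ = (a • z1 + b • z2).2 := by simp [smul_eq_mul]
  have hSopen : IsOpen S := by
    have hcont : ContinuousOn (fun z : (Fin n → ℝ) × ℝ => z.2 - h z.1)
        ((C0 n) ×ˢ (Set.univ : Set ℝ)) := by
      refine ContinuousOn.sub continuous_snd.continuousOn ?_
      exact (hconv.continuousOn isOpen_C0).comp continuous_fst.continuousOn
        (fun z hz => hz.1)
    have := hcont.isOpen_inter_preimage (isOpen_C0.prod isOpen_univ) (isOpen_Ioi (a := (0:ℝ)))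
    convert this using 1
    ext z
    simp only [hSdef, Set.mem_setOf_eq, Set.mem_inter_iff, Set.mem_preimage, Set.mem_prod,
      Set.mem_univ, and_true, Set.mem_Ioi, sub_pos]
  have hpnot : (p, h p) ∉ S := fun hc => lt_irrefl _ hc.2
  obtain ⟨φ, hφ⟩ := geometric_hahn_banach_open_point hScvx hSopen hpnot
  set c : ℝ := φ (0, 1) with hcdef
  have hc0 : c < 0 := by
    have hmem : ((p, h p + 1) : (Fin n → ℝ) × ℝ) ∈ S := ⟨hp, show h p < h p + 1 by linarith⟩
    have := hφ _ hmem
    have heq : ((p, h p + 1) : (Fin n → ℝ) × ℝ) = (p, h p) + (0, 1) := by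
      simp [Prod.ext_iff]
    rw [heq, map_add] at this
    linarith
  have hkey : ∀ x ∈ C0 n, φ (x, h x) ≤ φ (p, h p) := by
    intro x hx
    by_contra hlt
    push_neg at hlt
    set ε : ℝ := (φ (x, h x) - φ (p, h p)) / (-c) with hεdef
    have hε : 0 < ε := div_pos (by linarith) (by linarith)
    have hmem : ((x, h x + ε) : (Fin n → ℝ) × ℝ) ∈ S := ⟨hx, show h x < h x + ε by linarith⟩
    have hval := hφ _ hmem
    have heq : ((x, h x + ε) : (Fin n → ℝ) × ℝ) = (x, h x) + ε • (0, 1) := by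
      simp [Prod.ext_iff, smul_eq_mul]
    rw [heq, map_add, φ.map_smul, smul_eq_mul, ← hcdef] at hval
    have hcne : c ≠ 0 := ne_of_lt hc0
    have hεc : ε * c = -(φ (x, h x) - φ (p, h p)) := by
      rw [hεdef, div_mul_eq_mul_div, div_neg, mul_div_assoc, div_self hcne, mul_one]
    rw [hεc] at hval
    linarith
  refine ⟨fun i => φ ((fun j => if i = j then (1 : ℝ) else 0), 0) / (-c), fun x hx => ?_⟩
  have hdecomp : ∀ v : Fin n → ℝ,
      φ (v, 0) = ∑ i, v i * φ ((fun j => if i = j then (1 : ℝ) else 0), 0) := by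
    intro v
    have hv : ((v, (0 : ℝ)) : (Fin n → ℝ) × ℝ)
        = ∑ i, v i • (((fun j => if i = j then (1 : ℝ) else 0) : Fin n → ℝ), (0 : ℝ)) := by
      rw [Prod.ext_iff]
      constructor
      · simp only [Prod.fst_sum, Prod.smul_mk]
        exact pi_eq_sum_univ v
      · simp [Prod.snd_sum]
    rw [hv, map_sum]
    refine Finset.sum_congr rfl fun i _ => ?_
    rw [φ.map_smul, smul_eq_mul]
  have hx' := hkey x hx
  have hsplit : φ (x, h x) - φ (p, h p) = φ (x - p, 0) + (h x - h p) * c := by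
    rw [← map_sub]
    have heq : ((x, h x) - (p, h p) : (Fin n → ℝ) × ℝ)
        = (x - p, 0) + (h x - h p) • (0, 1) := by
      simp [Prod.ext_iff, smul_eq_mul]
    rw [heq, map_add, φ.map_smul, smul_eq_mul, ← hcdef]
  have hineq : φ (x - p, 0) + (h x - h p) * c ≤ 0 := by
    rw [← hsplit]; linarith
  rw [hdecomp (x - p)] at hineq
  have hsum : ∑ i, (φ ((fun j => if i = j then (1 : ℝ) else 0), 0) / (-c)) * (x i - p i)
      = (∑ i, (x - p) i * φ ((fun j => if i = j then (1 : ℝ) else 0), 0)) / (-c) := by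
    rw [Finset.sum_div]
    refine Finset.sum_congr rfl fun i _ => ?_
    simp only [Pi.sub_apply]
    ring
  rw [hsum]
  have hc' : (0:ℝ) < -c := by linarith
  have hfin : (∑ i, (x - p) i * φ ((fun j => if i = j then (1 : ℝ) else 0), 0))
      ≤ (h x - h p) * (-c) := by
    nlinarith [hineq]
  have := (div_le_iff₀ hc').2 hfin
  linarith

lemma ray_mem {a : Fin n → ℝ} (ha : a ∈ C0 n) {b : Fin n → ℝ} (hb : ∀ i, 0 ≤ b i)
    {t : ℝ} (ht : t ≤ 0) : a + t • b ∈ C0 n := by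
  refine mem_C0_mono ha fun i => ?_
  have : (a + t • b) i = a i + t * b i := by simp
  rw [this]
  nlinarith [hb i]

/-- Membership in the Newton body bounds the ray slope. -/
lemma raySlope_le {h : (Fin n → ℝ) → ℝ} {l : Fin n → ℝ} {C : ℝ} {a : Fin n → ℝ}
    (ha : a ∈ C0 n) (hl : ∀ x ∈ C0 n, ∑ i, l i * x i ≤ h x + C)
    (b : Fin n → ℝ) (hb : ∀ i, 0 ≤ b i) :
    raySlope n h a b ≤ ((∑ i, l i * b i : ℝ) : EReal) := by
  set K : ℝ := (∑ i, l i * a i) - C with hK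
  set v : ℝ → ℝ := fun t => (∑ i, l i * b i) + K / t with hv
  have hev : ∀ᶠ t in atBot, ((h (a + t • b) / t : ℝ) : EReal) ≤ ((v t : ℝ) : EReal) := by
    filter_upwards [eventually_le_atBot (-1 : ℝ)] with t ht1
    have ht : t < 0 := lt_of_le_of_lt ht1 (by norm_num)
    rw [EReal.coe_le_coe_iff]
    have hmem : a + t • b ∈ C0 n := ray_mem ha hb ht.le
    have hsum : ∑ i, l i * (a + t • b) i = (∑ i, l i * a i) + t * (∑ i, l i * b i) := by
      rw [Finset.mul_sum, ← Finset.sum_add_distrib]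
      refine Finset.sum_congr rfl fun i _ => ?_
      have : (a + t • b) i = a i + t * b i := by simp
      rw [this]; ring
    have hineq := hl _ hmem
    rw [hsum] at hineq
    rw [hv, div_le_iff_of_neg ht]
    have htne : t ≠ 0 := ne_of_lt ht
    have hKt : ((∑ i, l i * b i) + K / t) * t = t * (∑ i, l i * b i) + K := by
      field_simp
    rw [hKt, hK]
    linarith
  have hvt : Tendsto v atBot (𝓝 (∑ i, l i * b i)) := by
    have h1 : Tendsto (fun t : ℝ => K / (-t)) atBot (𝓝 0) :=
      tendsto_const_nhds.div_atTop tendsto_neg_atBot_atTop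
    have h2 : Tendsto (fun t : ℝ => K / t) atBot (𝓝 0) := by
      have := h1.neg
      simp only [neg_zero] at this
      convert this using 2 with t
      rw [div_neg, neg_neg]
    have := (tendsto_const_nhds (x := (∑ i, l i * b i)) (f := atBot (α := ℝ))).add h2
    simpa using this
  have hlim : Filter.limsup (fun t : ℝ => ((v t : ℝ) : EReal)) atBot
      = ((∑ i, l i * b i : ℝ) : EReal) := by
    refine Filter.Tendsto.limsup_eq ?_
    exact EReal.tendsto_coe.2 hvt
  calc raySlope n h a b ≤ Filter.limsup (fun t : ℝ => ((v t : ℝ) : EReal)) atBot :=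
    Filter.limsup_le_limsup hev
  _ = _ := hlim

/-- From a strict slope bound produce an element of the Newton body with small pairing. -/
lemma exists_small_pairing {g : (Fin n → ℝ) → ℝ} (hgconv : ConvexOn ℝ (C0 n) g)
    {a : Fin n → ℝ} (ha : a ∈ C0 n) (hga : g a ≤ 0)
    (b : Fin n → ℝ) (hb : ∀ i, 0 ≤ b i) {s : ℝ}
    (hs : raySlope n g a b < (s : EReal)) :
    ∃ (m : Fin n → ℝ) (C : ℝ), (∀ x ∈ C0 n, ∑ i, m i * x i ≤ g x + C) ∧
      ∑ i, m i * b i < s := by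
  have hfreq := eventually_lt_of_limsup_lt hs
  obtain ⟨t, hts, ht1⟩ := (hfreq.and (eventually_le_atBot (-1 : ℝ))).exists
  have ht : t < 0 := lt_of_le_of_lt ht1 (by norm_num)
  rw [EReal.coe_lt_coe_iff] at hts
  set p : Fin n → ℝ := a + t • b with hp
  have hpmem : p ∈ C0 n := ray_mem ha hb ht.le
  obtain ⟨m, hm⟩ := exists_subgradient hgconv hpmem
  refine ⟨m, (∑ i, m i * p i) - g p, fun x hx => ?_, ?_⟩
  · have h1 := hm x hx
    have hsplit : ∑ i, m i * (x i - p i) = (∑ i, m i * x i) - (∑ i, m i * p i) := by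
      rw [← Finset.sum_sub_distrib]
      exact Finset.sum_congr rfl fun i _ => by ring
    rw [hsplit] at h1
    linarith
  · have hma := hm a ha
    have hsplit : ∑ i, m i * (a i - p i) = -t * (∑ i, m i * b i) := by
      rw [Finset.mul_sum]
      refine Finset.sum_congr rfl fun i _ => ?_
      have : p i = a i + t * b i := by rw [hp]; simp
      rw [this]; ring
    rw [hsplit] at hma
    have h1 : g p / t < s := hts
    have h2 : ∑ i, m i * b i ≤ (g p - g a) / t := by
      rw [le_div_iff_of_neg ht]
      linarith
    have h3 : (g p - g a) / t = g p / t - g a / t := sub_div _ _ _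
    have h4 : 0 ≤ g a / t := div_nonneg_of_nonpos hga ht.le
    linarith

end NB

/-- Let `f, g` be convex functions on `C₀` increasing in each variable with
boundary values `0`.  If `lim_{t→-∞} f(a+tb)/t ≥ lim_{t→-∞} g(a+tb)/t` for all `a ∈ C₀` and
all `b ∈ ℕⁿ` with positive entries, then `cl Γ(f) ⊆ cl Γ(g)`. -/
theorem closure_newtonBody_subset (n : ℕ) (f g : (Fin n → ℝ) → ℝ)
    (hfconv : ConvexOn ℝ (C0 n) f) (hgconv : ConvexOn ℝ (C0 n) g)
    (hfmono : ∀ x ∈ C0 n, ∀ y ∈ C0 n, (∀ i, x i ≤ y i) → f x ≤ f y)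
    (hgmono : ∀ x ∈ C0 n, ∀ y ∈ C0 n, (∀ i, x i ≤ y i) → g x ≤ g y)
    (hfbd : ∀ x ∈ frontier (C0 n), Tendsto f (𝓝[C0 n] x) (𝓝 (0 : ℝ)))
    (hgbd : ∀ x ∈ frontier (C0 n), Tendsto g (𝓝[C0 n] x) (𝓝 (0 : ℝ)))
    (hslope : ∀ a ∈ C0 n, ∀ b : Fin n → ℕ, (∀ i, 0 < b i) →
      raySlope n g a (fun i => (b i : ℝ)) ≤ raySlope n f a (fun i => (b i : ℝ))) :
    closure {l : Fin n → ℝ | ∃ C : ℝ, ∀ x ∈ C0 n, ∑ i, l i * x i ≤ f x + C}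
      ⊆ closure {l : Fin n → ℝ | ∃ C : ℝ, ∀ x ∈ C0 n, ∑ i, l i * x i ≤ g x + C} := by
  classical
  rcases Nat.eq_zero_or_pos n with hn | hn
  · subst hn
    intro l _
    apply subset_closure
    refine ⟨1 - g (fun i => i.elim0), fun x hx => ?_⟩
    have hx0 : x = fun i => i.elim0 := funext fun i => i.elim0
    rw [hx0]
    simp
  · -- positive dimension
    set Γg : Set (Fin n → ℝ) :=
      {l : Fin n → ℝ | ∃ C : ℝ, ∀ x ∈ C0 n, ∑ i, l i * x i ≤ g x + C} with hΓg
    refine closure_minimal ?_ isClosed_closure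
    rintro l ⟨Cf, hCf⟩
    by_contra hnot
    have hfnonpos : ∀ x ∈ C0 n, f x ≤ 0 := fun x hx => NB.nonpos_on hn hfmono hfbd hx
    have hgnonpos : ∀ x ∈ C0 n, g x ≤ 0 := fun x hx => NB.nonpos_on hn hgmono hgbd hx
    have hlnonneg : ∀ i, 0 ≤ l i := NB.gamma_nonneg hfnonpos hCf
    -- Γg is convex and nonempty
    have hΓgconv : Convex ℝ Γg := by
      rintro m1 ⟨C1, h1⟩ m2 ⟨C2, h2⟩ a b ha hb hab
      refine ⟨a * C1 + b * C2, fun x hx => ?_⟩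
      have hsum : ∑ i, (a • m1 + b • m2) i * x i
          = a * (∑ i, m1 i * x i) + b * (∑ i, m2 i * x i) := by
        rw [Finset.mul_sum, Finset.mul_sum, ← Finset.sum_add_distrib]
        refine Finset.sum_congr rfl fun i _ => ?_
        have : (a • m1 + b • m2) i = a * m1 i + b * m2 i := by simp
        rw [this]; ring
      rw [hsum]
      have e1 : a * (∑ i, m1 i * x i) ≤ a * (g x + C1) :=
        mul_le_mul_of_nonneg_left (h1 x hx) ha
      have e2 : b * (∑ i, m2 i * x i) ≤ b * (g x + C2) :=
        mul_le_mul_of_nonneg_left (h2 x hx) hb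
      have e3 : a * (g x + C1) + b * (g x + C2) = g x + (a * C1 + b * C2) := by
        linear_combination (g x) * hab
      linarith
    -- separation
    obtain ⟨d, u, hdu, hul⟩ :=
      geometric_hahn_banach_closed_point hΓgconv.closure isClosed_closure hnot
    -- coordinates of d
    set E : Fin n → (Fin n → ℝ) := fun i => fun j => if i = j then (1 : ℝ) else 0 with hE
    have hdv : ∀ v : Fin n → ℝ, d v = ∑ i, v i * d (E i) := by
      intro v
      conv_lhs => rw [pi_eq_sum_univ v]
      rw [map_sum]
      exact Finset.sum_congr rfl fun i _ => by rw [d.map_smul, smul_eq_mul]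
    -- a base element of Γg
    obtain ⟨m₀, hm₀⟩ := NB.exists_subgradient hgconv (NB.a0_mem (n := n))
    have hm₀mem : m₀ ∈ Γg := by
      refine ⟨(∑ i, m₀ i * NB.a0 n i) - g (NB.a0 n), fun x hx => ?_⟩
      have h1 := hm₀ x hx
      have hsplit : ∑ i, m₀ i * (x i - NB.a0 n i)
          = (∑ i, m₀ i * x i) - (∑ i, m₀ i * NB.a0 n i) := by
        rw [← Finset.sum_sub_distrib]
        exact Finset.sum_congr rfl fun i _ => by ring
      rw [hsplit] at h1
      linarith
    -- d is ≤ 0 on coordinates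
    have hdE : ∀ i, d (E i) ≤ 0 := by
      intro i
      by_contra hpos
      push_neg at hpos
      have hdm0 : d m₀ < u := hdu _ (subset_closure hm₀mem)
      set r : ℝ := (u - d m₀) / d (E i) with hr
      have hr0 : 0 ≤ r := le_of_lt (div_pos (by linarith) hpos)
      have hmem : m₀ + r • E i ∈ Γg := by
        obtain ⟨C₀, hC₀⟩ := hm₀mem
        refine ⟨C₀, fun x hx => ?_⟩
        have hsum : ∑ j, (m₀ + r • E i) j * x j = (∑ j, m₀ j * x j) + r * x i := by
          calc ∑ j, (m₀ + r • E i) j * x j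
              = ∑ j, (m₀ j * x j + if i = j then r * x j else 0) := by
                refine Finset.sum_congr rfl fun j _ => ?_
                have : (m₀ + r • E i) j = m₀ j + r * (if i = j then (1:ℝ) else 0) := by
                  simp [hE]
                rw [this]
                split <;> ring
          _ = (∑ j, m₀ j * x j) + ∑ j, (if i = j then r * x j else 0) :=
                Finset.sum_add_distrib
          _ = (∑ j, m₀ j * x j) + r * x i := by
                rw [Finset.sum_ite_eq Finset.univ i (fun j => r * x j)]
                simp
        rw [hsum]
        have : r * x i ≤ 0 :=
          mul_nonpos_of_nonneg_of_nonpos hr0 (NB.coord_neg hx i).le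
        linarith [hC₀ x hx]
      have hval : d (m₀ + r • E i) = u := by
        rw [map_add, d.map_smul, smul_eq_mul, hr, div_mul_cancel₀ _ (ne_of_gt hpos)]
        ring
      have := hdu _ (subset_closure hmem)
      rw [hval] at this
      exact lt_irrefl u this
    set b : Fin n → ℝ := fun i => -(d (E i)) with hb
    have hbnn : ∀ i, 0 ≤ b i := fun i => by simp [hb]; linarith [hdE i]
    have hdneg : ∀ v : Fin n → ℝ, d v = -∑ i, b i * v i := by
      intro v
      rw [hdv v, ← Finset.sum_neg_distrib]
      exact Finset.sum_congr rfl fun i _ => by simp [hb]; ring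
    have hbm : ∀ m : Fin n → ℝ, m ∈ Γg → -u < ∑ i, b i * m i := by
      intro m hm
      have := hdu _ (subset_closure hm)
      rw [hdneg m] at this
      linarith
    have hbl : ∑ i, b i * l i < -u := by
      have := hul
      rw [hdneg l] at this
      linarith
    -- numerics
    set L : ℝ := ∑ i, l i with hL
    have hL0 : 0 ≤ L := Finset.sum_nonneg fun i _ => hlnonneg i
    set ε : ℝ := -u - ∑ i, b i * l i with hε
    have hε0 : 0 < ε := by simp only [hε]; linarith
    set N : ℕ := ⌈(2 * L) / ε⌉₊ + 1 with hN
    have hN0 : (0 : ℝ) < (N : ℝ) := by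
      have : 0 < N := Nat.succ_pos _
      exact_mod_cast this
    have hNε : 2 * L < (N : ℝ) * ε := by
      have h1 : (2 * L) / ε < (N : ℝ) := by
        have h2 := Nat.le_ceil ((2 * L) / ε)
        have h3 : ((⌈(2 * L) / ε⌉₊ : ℝ) : ℝ) < (N : ℝ) := by
          rw [hN]; push_cast; linarith
        linarith
      exact (div_lt_iff₀ hε0).1 h1
    set β : Fin n → ℕ := fun i => ⌈(N : ℝ) * b i⌉₊ + 1 with hβ
    have hβpos : ∀ i, 0 < β i := fun i => Nat.succ_pos _
    set bR : Fin n → ℝ := fun i => ((β i : ℕ) : ℝ) with hbR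
    have hbRnn : ∀ i, 0 ≤ bR i := fun i => Nat.cast_nonneg _
    have hβlow : ∀ i, (N : ℝ) * b i ≤ bR i := by
      intro i
      have h1 := Nat.le_ceil ((N : ℝ) * b i)
      have : bR i = (⌈(N : ℝ) * b i⌉₊ : ℝ) + 1 := by
        simp only [hbR, hβ]; push_cast; ring
      rw [this]; linarith
    have hβhigh : ∀ i, bR i < (N : ℝ) * b i + 2 := by
      intro i
      have hnn : 0 ≤ (N : ℝ) * b i := mul_nonneg hN0.le (hbnn i)
      have h1 := Nat.ceil_lt_add_one hnn
      have : bR i = (⌈(N : ℝ) * b i⌉₊ : ℝ) + 1 := by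
        simp only [hbR, hβ]; push_cast; ring
      rw [this]; linarith
    -- the chain of slope inequalities
    have hray_f : raySlope n f (NB.a0 n) bR ≤ ((∑ i, l i * bR i : ℝ) : EReal) :=
      NB.raySlope_le NB.a0_mem hCf bR hbRnn
    have hray_gf : raySlope n g (NB.a0 n) bR ≤ raySlope n f (NB.a0 n) bR :=
      hslope (NB.a0 n) NB.a0_mem β hβpos
    have key3 : ∑ i, l i * bR i < -((N : ℝ) * u) := by
      have t1 : ∑ i, l i * bR i ≤ ∑ i, l i * ((N : ℝ) * b i + 2) :=
        Finset.sum_le_sum fun i _ =>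
          mul_le_mul_of_nonneg_left (hβhigh i).le (hlnonneg i)
      have t2 : ∑ i, l i * ((N : ℝ) * b i + 2) = (N : ℝ) * (∑ i, b i * l i) + 2 * L := by
        rw [hL, Finset.mul_sum, Finset.mul_sum, ← Finset.sum_add_distrib]
        exact Finset.sum_congr rfl fun i _ => by ring
      have t4 : (N : ℝ) * (∑ i, b i * l i) + (N : ℝ) * ε = -((N : ℝ) * u) := by
        rw [← mul_add]
        have : (∑ i, b i * l i) + ε = -u := by rw [hε]; ring
        rw [this]; ring
      nlinarith [t1, t2, t4, hNε]
    have hgslope_lt : raySlope n g (NB.a0 n) bR < ((-((N : ℝ) * u) : ℝ) : EReal) :=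
      lt_of_le_of_lt (le_trans hray_gf hray_f) (EReal.coe_lt_coe_iff.2 key3)
    obtain ⟨m, C, hmmem, hmb⟩ :=
      NB.exists_small_pairing hgconv NB.a0_mem (hgnonpos _ NB.a0_mem) bR hbRnn hgslope_lt
    have hmnn : ∀ i, 0 ≤ m i := NB.gamma_nonneg hgnonpos hmmem
    have h5 : -u < ∑ i, b i * m i := hbm m ⟨C, hmmem⟩
    have h6 : (N : ℝ) * (-u) < (N : ℝ) * (∑ i, b i * m i) :=
      (mul_lt_mul_iff_right₀ hN0).2 h5
    have h7 : (N : ℝ) * (∑ i, b i * m i) ≤ ∑ i, m i * bR i := by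
      rw [Finset.mul_sum]
      refine Finset.sum_le_sum fun i _ => ?_
      have := hβlow i
      nlinarith [hmnn i, hβlow i]
    nlinarith [hmb, h6, h7]


end
end

section
/- Let f and g be negative convex increasing functions on ℝ_{<0}. Then lim_{c→+∞} P(f, g+c) = f pointwise on ℝ_{<0} if and only if lim_{t→−∞} f(t)/t ≥ lim_{t→−∞} g(t)/t (these limits exist in [0, +∞] by convexity). -/
/-!
Write `σ = slopeAtBot`. If `σ g ≤ σ f`, let `k` be the right derivative of `f` at `t`, so that
`f` lies above its tangent line at `t` and `σ f ≤ k`. For `ε > 0`, the line through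
`(t, f t - ε)` whose slope exceeds `k` by `ε / -t` still lies below `f` on `ℝ_{<0}`, and, its
slope exceeding `σ g`, below `g + c` once `c` is large; hence `P(f, g+c)(t) ≥ f t - ε` eventually.

Conversely, if `σ f < m < σ g`, then `g y < m y` for arbitrarily negative `y`. Every chord of a
convex `u ≤ g + c` then has slope at least `m`, since a chord of smaller slope, extended to the
left, would eventually lie above `y ↦ m y + c`. So `P(f, g+c)(t) ≤ f t₁ + m (t - t₁)` for
`t < t₁ < 0`, uniformly in `c`; letting `c → ∞` gives `f t ≤ f t₁ + m (t - t₁)`, whence `σ f ≥ m`.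
-/

open Filter MeasureTheory Metric Set
open scoped ENNReal Topology

noncomputable section

/-- The convex envelope `P(f, g+c)(t)`: the supremum at `t` of all convex functions on
`ℝ_{<0}` lying below `min(f, g+c)` there. -/
def convEnv1 (f g : ℝ → ℝ) (c : ℝ) (t : ℝ) : EReal :=
  ⨆ (u : ℝ → ℝ) (_ : ConvexOn ℝ (Iio (0:ℝ)) u ∧
      ∀ s ∈ Iio (0:ℝ), u s ≤ min (f s) (g s + c)), ((u t : ℝ) : EReal)

/-- The slope at infinity `lim_{t→-∞} h(t)/t`, as a `limsup` in `EReal` (for convex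
increasing `h` the limit exists in `[0,+∞]`). -/
def slopeAtBot (h : ℝ → ℝ) : EReal :=
  Filter.limsup (fun t : ℝ => ((h t / t : ℝ) : EReal)) atBot

lemma ConvexOn.add_rightDeriv_mul_sub_le {S : Set ℝ} {f : ℝ → ℝ} {x y : ℝ}
    (hf : ConvexOn ℝ S f) (hx : x ∈ interior S) (hy : y ∈ S) :
    f x + derivWithin f (Ioi x) x * (y - x) ≤ f y := by
  rcases lt_trichotomy y x with hyx | rfl | hxy
  · have hslope := (hf.slope_le_leftDeriv_of_mem_interior hy hx hyx).trans
      (hf.leftDeriv_le_rightDeriv_of_mem_interior hx)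
    rw [slope_def_field, div_le_iff₀ (sub_pos.2 hyx)] at hslope
    linarith
  · simp
  · have hslope := hf.rightDeriv_le_slope_of_mem_interior hx hy hxy
    rw [slope_def_field, le_div_iff₀ (sub_pos.2 hxy)] at hslope
    linarith

lemma ConvexOn.add_mul_sub_le_of_frequently_le {u : ℝ → ℝ} {a m c t t₁ : ℝ}
    (hu : ConvexOn ℝ (Iio a) u) (hfreq : ∃ᶠ y in atBot, u y ≤ m * y + c)
    (htt₁ : t < t₁) (ht₁ : t₁ < a) :
    u t + m * (t₁ - t) ≤ u t₁ := by
  set S := (u t - u t₁) / (t - t₁)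
  have hsupport : ∀ y < t, u t₁ + S * (y - t₁) ≤ u y := by
    intro y hy
    have hsec := hu.secant_mono ht₁ (hy.trans (htt₁.trans ht₁)) (htt₁.trans ht₁)
      (by linarith) htt₁.ne hy.le
    rw [div_le_iff_of_neg (by linarith)] at hsec
    linarith
  have hm : m ≤ S := by
    by_contra! hSm
    obtain ⟨y, hy, hyc, hyt⟩ := (hfreq.and_eventually ((eventually_le_atBot
      ((c - u t₁ + S * t₁) / (S - m) - 1)).and (eventually_lt_atBot t))).exists
    have hq : (S - m) * ((c - u t₁ + S * t₁) / (S - m)) = c - u t₁ + S * t₁ :=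
      mul_div_cancel₀ _ (by linarith)
    nlinarith [hsupport y hyt]
  have hS : S * (t - t₁) = u t - u t₁ := div_mul_cancel₀ _ (by linarith)
  nlinarith

lemma slopeAtBot_le_of_eventually_affine_le {h : ℝ → ℝ} {k b : ℝ}
    (hle : ∀ᶠ t in atBot, k * t + b ≤ h t) : slopeAtBot h ≤ k := by
  have hlim : Tendsto (fun t : ℝ => ((k + b / t : ℝ) : EReal)) atBot (𝓝 k) := by
    simpa using EReal.tendsto_coe.2 (tendsto_const_nhds.add (tendsto_id.const_div_atBot b))
  rw [← hlim.limsup_eq]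
  refine limsup_le_limsup ?_
  filter_upwards [hle, eventually_lt_atBot 0] with t ht ht0
  rw [EReal.coe_le_coe_iff, div_le_iff_of_neg ht0]
  have : (k + b / t) * t = k * t + b := by rw [add_mul, div_mul_cancel₀ _ ht0.ne]
  linarith

lemma le_slopeAtBot_of_eventually_le_affine {h : ℝ → ℝ} {k b : ℝ}
    (hle : ∀ᶠ t in atBot, h t ≤ k * t + b) : (k : EReal) ≤ slopeAtBot h := by
  have hlim : Tendsto (fun t : ℝ => ((k + b / t : ℝ) : EReal)) atBot (𝓝 k) := by
    simpa using EReal.tendsto_coe.2 (tendsto_const_nhds.add (tendsto_id.const_div_atBot b))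
  rw [← hlim.liminf_eq]
  refine (liminf_le_liminf ?_).trans liminf_le_limsup
  filter_upwards [hle, eventually_lt_atBot 0] with t ht ht0
  rw [EReal.coe_le_coe_iff, le_div_iff_of_neg ht0]
  have : (k + b / t) * t = k * t + b := by rw [add_mul, div_mul_cancel₀ _ ht0.ne]
  linarith

lemma MonotoneOn.exists_affine_le_of_slopeAtBot_lt {g : ℝ → ℝ} {m : ℝ}
    (hg : MonotoneOn g (Iio 0)) (h : slopeAtBot g < m) :
    ∃ b, ∀ s < 0, m * s + b ≤ g s := by
  obtain ⟨T, hT⟩ := eventually_atBot.1 ((eventually_lt_of_limsup_lt h).and (eventually_lt_atBot 0))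
  refine ⟨min 0 (g T - max 0 (m * T)), fun s hs => ?_⟩
  rcases le_or_gt s T with hsT | hTs
  · have := EReal.coe_lt_coe_iff.1 (hT s hsT).1
    rw [div_lt_iff_of_neg hs] at this
    linarith [min_le_left 0 (g T - max 0 (m * T))]
  · have hgT := hg (hT T le_rfl).2 hs hTs.le
    have hms : m * s ≤ max 0 (m * T) := by
      rcases le_total 0 m with hm | hm
      · exact (mul_nonpos_of_nonneg_of_nonpos hm hs.le).trans (le_max_left _ _)
      · exact (mul_le_mul_of_nonpos_left hTs.le hm).trans (le_max_right _ _)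
    linarith [min_le_right 0 (g T - max 0 (m * T))]

section Envelope

variable {f g : ℝ → ℝ} {c t : ℝ}

lemma convEnv1_le (ht : t < 0) : convEnv1 f g c t ≤ f t :=
  iSup₂_le fun _ hu => EReal.coe_le_coe_iff.2 ((hu.2 t ht).trans (min_le_left _ _))

lemma affine_le_convEnv1 {m b : ℝ} (hf : ∀ s < 0, m * s + b ≤ f s)
    (hg : ∀ s < 0, m * s + b ≤ g s + c) : ((m * t + b : ℝ) : EReal) ≤ convEnv1 f g c t :=
  le_iSup₂_of_le (fun s => m * s + b)
    ⟨((LinearMap.mulLeft ℝ m).convexOn (convex_Iio 0)).add (convexOn_const b (convex_Iio 0)),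
      fun s hs => le_min (hf s hs) (hg s hs)⟩ le_rfl

lemma convEnv1_le_of_frequently_lt {m t₁ : ℝ} (hfreq : ∃ᶠ y in atBot, g y < m * y)
    (htt₁ : t < t₁) (ht₁ : t₁ < 0) : convEnv1 f g c t ≤ ((f t₁ + m * (t - t₁) : ℝ) : EReal) := by
  refine iSup₂_le fun u ⟨hu, hle⟩ => EReal.coe_le_coe_iff.2 ?_
  have hfreq' : ∃ᶠ y in atBot, u y ≤ m * y + c :=
    (hfreq.and_eventually (eventually_lt_atBot 0)).mono fun y ⟨hy, hy0⟩ =>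
      by linarith [(hle y hy0).trans (min_le_right _ _)]
  linarith [hu.add_mul_sub_le_of_frequently_le hfreq' htt₁ ht₁,
    (hle t₁ ht₁).trans (min_le_left _ _)]

lemma slopeAtBot_le_of_tendsto_convEnv1
    (H : ∀ t < (0:ℝ), Tendsto (fun c : ℝ => convEnv1 f g c t) atTop (𝓝 ((f t : ℝ) : EReal))) :
    slopeAtBot g ≤ slopeAtBot f := by
  by_contra! hlt
  obtain ⟨m, hfm, hmg⟩ := EReal.lt_iff_exists_real_btwn.1 hlt
  have hfreq : ∃ᶠ y in atBot, g y < m * y :=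
    ((frequently_lt_of_lt_limsup (h := hmg)).and_eventually (eventually_lt_atBot 0)).mono
      fun y ⟨hy, hy0⟩ => (lt_div_iff_of_neg hy0).1 (EReal.coe_lt_coe_iff.1 hy)
  have hf : ∀ t < (-1 : ℝ), f t ≤ m * t + (f (-1) + m) := by
    intro t ht
    have := le_of_tendsto' (H t (by linarith)) fun c =>
      convEnv1_le_of_frequently_lt (c := c) hfreq ht (by norm_num)
    linarith [EReal.coe_le_coe_iff.1 this]
  exact (le_slopeAtBot_of_eventually_le_affine ((eventually_lt_atBot (-1)).mono hf)).not_gt hfm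

lemma tendsto_convEnv1_of_slopeAtBot_le (hf : ConvexOn ℝ (Iio 0) f) (hg : MonotoneOn g (Iio 0))
    (hslope : slopeAtBot g ≤ slopeAtBot f) (ht : t < 0) :
    Tendsto (fun c : ℝ => convEnv1 f g c t) atTop (𝓝 ((f t : ℝ) : EReal)) := by
  set k := derivWithin f (Ioi t) t
  have htangent : ∀ s < 0, f t + k * (s - t) ≤ f s := fun s hs =>
    hf.add_rightDeriv_mul_sub_le (by rwa [interior_Iio]) hs
  have hfk : slopeAtBot f ≤ k := slopeAtBot_le_of_eventually_affine_le (b := f t - k * t)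
    ((eventually_lt_atBot 0).mono fun s hs => by linarith [htangent s hs])
  refine tendsto_order.2 ⟨fun b hb => ?_, fun b hb => Eventually.of_forall
    fun c => (convEnv1_le ht).trans_lt hb⟩
  obtain ⟨x, hbx, hxf⟩ := EReal.lt_iff_exists_real_btwn.1 hb
  have hε : 0 < f t - x := sub_pos.2 (EReal.coe_lt_coe_iff.1 hxf)
  set m := k + (f t - x) / -t
  have hkm : k < m := lt_add_of_pos_right _ (div_pos hε (neg_pos.2 ht))
  obtain ⟨b₀, hb₀⟩ := hg.exists_affine_le_of_slopeAtBot_lt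
    (hslope.trans_lt (hfk.trans_lt (EReal.coe_lt_coe_iff.2 hkm)))
  have hline_f : ∀ s < 0, m * s + (x - m * t) ≤ f s := by
    intro s hs
    have hshift : (f t - x) / -t * (s - t) ≤ f t - x := by
      rw [div_mul_eq_mul_div, div_le_iff₀ (neg_pos.2 ht)]
      nlinarith
    have hm : m * s + (x - m * t) = x + k * (s - t) + (f t - x) / -t * (s - t) := by ring
    linarith [htangent s hs]
  filter_upwards [eventually_ge_atTop (x - m * t - b₀)] with c hc
  have := affine_le_convEnv1 (g := g) (c := c) (t := t) hline_f fun s hs => by linarith [hb₀ s hs]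
  rw [show m * t + (x - m * t) = x by ring] at this
  exact hbx.trans_le this

end Envelope

theorem convEnv1_tendsto_iff_slope_general (f g : ℝ → ℝ)
    (hfconv : ConvexOn ℝ (Iio (0:ℝ)) f)
    (hgmono : MonotoneOn g (Iio (0:ℝ))) :
    (∀ t < (0:ℝ), Tendsto (fun c : ℝ => convEnv1 f g c t) atTop (𝓝 ((f t : ℝ) : EReal)))
      ↔ slopeAtBot g ≤ slopeAtBot f :=
  ⟨slopeAtBot_le_of_tendsto_convEnv1,
    fun h _ ht => tendsto_convEnv1_of_slopeAtBot_le hfconv hgmono h ht⟩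

/-- For negative convex increasing functions `f, g` on `ℝ_{<0}`,
`lim_{c→∞} P(f,g+c) = f` pointwise iff `lim_{t→-∞} f(t)/t ≥ lim_{t→-∞} g(t)/t`. -/
theorem convEnv1_tendsto_iff_slope (f g : ℝ → ℝ)
    (hfconv : ConvexOn ℝ (Iio (0:ℝ)) f) (hgconv : ConvexOn ℝ (Iio (0:ℝ)) g)
    (hfmono : MonotoneOn f (Iio (0:ℝ))) (hgmono : MonotoneOn g (Iio (0:ℝ)))
    (hfneg : ∀ t < (0:ℝ), f t < 0) (hgneg : ∀ t < (0:ℝ), g t < 0) :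
    (∀ t < (0:ℝ), Tendsto (fun c : ℝ => convEnv1 f g c t) atTop (𝓝 ((f t : ℝ) : EReal)))
      ↔ slopeAtBot g ≤ slopeAtBot f :=
  convEnv1_tendsto_iff_slope_general f g hfconv hgmono

end
end

section
/- Let f and g be negative convex increasing functions on ℝ_{<0}. If lim_{c→+∞} P(f, g+c) = f pointwise on ℝ_{<0}, then lim_{t→−∞} f(t)/t ≥ lim_{t→−∞} g(t)/t. -/
/-!
If `M` is below the slope of `g` at `-∞`, then `g s < M s` for arbitrarily negative `s`. A convex
`u ≤ min(f, g + c)` interpolated between such an `s` and a point `r` gives, as `s → -∞`,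
`u t ≤ f r + M (t - r)` for `t < r`, a bound independent of `c`. Letting `c → ∞`, the same bound
holds for `f`, so `f` has slope at least `M` at `-∞`.
-/

open Filter MeasureTheory Metric Set
open scoped ENNReal Topology

noncomputable section

lemma frequently_lt_mul_of_coe_lt_slopeAtBot {g : ℝ → ℝ} {M : ℝ}
    (hM : (M : EReal) < slopeAtBot g) : ∃ᶠ s in atBot, g s < M * s := by
  refine ((frequently_lt_of_lt_limsup (by isBoundedDefault) hM).and_eventually
    (eventually_lt_atBot 0)).mono fun s ⟨hMs, hs⟩ => ?_
  have hMs : M < g s / s := EReal.coe_lt_coe_iff.1 hMs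
  rwa [lt_div_iff_of_neg hs] at hMs

lemma coe_le_slopeAtBot_of_le_add_mul {h : ℝ → ℝ} {a M r : ℝ}
    (hh : ∀ t < r, h t ≤ a + M * t) : (M : EReal) ≤ slopeAtBot h := by
  have hlim : Tendsto (fun t : ℝ => ((a / t + M : ℝ) : EReal)) atBot (𝓝 (M : EReal)) := by
    refine (continuous_coe_real_ereal.tendsto M).comp ?_
    simpa using (tendsto_const_nhds.div_atBot tendsto_id).add_const M
  calc (M : EReal) = liminf (fun t : ℝ => ((a / t + M : ℝ) : EReal)) atBot := hlim.liminf_eq.symm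
    _ ≤ liminf (fun t : ℝ => ((h t / t : ℝ) : EReal)) atBot := by
      refine liminf_le_liminf ?_
      filter_upwards [eventually_lt_atBot (min r 0)] with t ht
      have ht0 : t < 0 := ht.trans_le (min_le_right _ _)
      rw [EReal.coe_le_coe_iff, div_add' _ _ _ ht0.ne]
      exact div_le_div_of_nonpos_of_le ht0.le
        (by linarith [hh t (ht.trans_le (min_le_left _ _))])
    _ ≤ slopeAtBot h := liminf_le_limsup (by isBoundedDefault) (by isBoundedDefault)

lemma ConvexOn.le_add_mul_sub_of_frequently_lt_mul {u g : ℝ → ℝ} {M c t r : ℝ}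
    (hu : ConvexOn ℝ (Iio 0) u) (hug : ∀ s < 0, u s ≤ g s + c)
    (hg : ∃ᶠ s in atBot, g s < M * s) (htr : t < r) (hr : r < 0) :
    u t ≤ u r + M * (t - r) := by
  -- the chord from `(s, M s + c)` to `(r, u r)`, evaluated at `t`
  set F : ℝ → ℝ := fun s => u r + M * (t - r) + (r - t) * (M * r + c - u r) / (r - s)
  have hF : Tendsto F atBot (𝓝 (u r + M * (t - r))) := by
    have hrs : Tendsto (fun s : ℝ => r - s) atBot atTop :=
      tendsto_atTop_add_const_left _ r tendsto_neg_atBot_atTop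
    simpa using tendsto_const_nhds.add (tendsto_const_nhds.div_atTop hrs)
  refine isClosed_Ici.mem_of_frequently_of_tendsto ?_ hF
  refine (hg.and_eventually (eventually_lt_atBot t)).mono fun s ⟨hgs, hst⟩ => ?_
  have hchord : (r - s) * u t ≤ (r - t) * u s + (t - s) * u r :=
    hu.secant_mono_aux1 (hst.trans (htr.trans hr)) hr hst htr
  have hus : (r - t) * u s ≤ (r - t) * (M * s + c) :=
    mul_le_mul_of_nonneg_left (by linarith [hug s (by linarith)]) (by linarith)
  have hFs : F s = ((r - t) * (M * s + c) + (t - s) * u r) / (r - s) := by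
    simp only [F]
    field_simp [(by linarith : r - s ≠ 0)]
    ring
  rw [mem_Ici, hFs, le_div_iff₀ (by linarith)]
  linarith

lemma convEnv1_le_add_mul_sub {f g : ℝ → ℝ} {M t r : ℝ} (hg : ∃ᶠ s in atBot, g s < M * s)
    (htr : t < r) (hr : r < 0) (c : ℝ) : convEnv1 f g c t ≤ ((f r + M * (t - r) : ℝ) : EReal) :=
  iSup₂_le fun _u ⟨hu, hle⟩ => EReal.coe_le_coe_iff.2 <|
    (hu.le_add_mul_sub_of_frequently_lt_mul (fun s hs => (hle s hs).trans (min_le_right _ _))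
      hg htr hr).trans (by linarith [(hle r hr).trans (min_le_left _ _)])

lemma le_add_mul_sub_of_tendsto_convEnv1 {f g : ℝ → ℝ} {M t r : ℝ}
    (hconv : Tendsto (fun c : ℝ => convEnv1 f g c t) atTop (𝓝 ((f t : ℝ) : EReal)))
    (hg : ∃ᶠ s in atBot, g s < M * s) (htr : t < r) (hr : r < 0) :
    f t ≤ f r + M * (t - r) :=
  EReal.coe_le_coe_iff.1 (le_of_tendsto' hconv (convEnv1_le_add_mul_sub hg htr hr))

theorem slope_of_convEnv1_tendsto_general (f g : ℝ → ℝ)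
    (hconv : ∀ t < (0:ℝ),
      Tendsto (fun c : ℝ => convEnv1 f g c t) atTop (𝓝 ((f t : ℝ) : EReal))) :
    slopeAtBot g ≤ slopeAtBot f := by
  refine EReal.ge_of_forall_gt_iff_ge.1 fun M hM => ?_
  have hg := frequently_lt_mul_of_coe_lt_slopeAtBot hM
  refine coe_le_slopeAtBot_of_le_add_mul (a := f (-1) + M) (r := -1) fun t ht => ?_
  calc f t ≤ f (-1) + M * (t - -1) :=
        le_add_mul_sub_of_tendsto_convEnv1 (hconv t (by linarith)) hg ht (by norm_num)
    _ = f (-1) + M + M * t := by ring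

/-- For negative convex increasing functions `f, g` on `ℝ_{<0}`, if
`lim_{c→∞} P(f,g+c) = f` pointwise, then `lim_{t→-∞} f(t)/t ≥ lim_{t→-∞} g(t)/t`. -/
theorem slope_of_convEnv1_tendsto (f g : ℝ → ℝ)
    (hfconv : ConvexOn ℝ (Iio (0:ℝ)) f) (hgconv : ConvexOn ℝ (Iio (0:ℝ)) g)
    (hfmono : MonotoneOn f (Iio (0:ℝ))) (hgmono : MonotoneOn g (Iio (0:ℝ)))
    (hfneg : ∀ t < (0:ℝ), f t < 0) (hgneg : ∀ t < (0:ℝ), g t < 0)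
    (hconv : ∀ t < (0:ℝ),
      Tendsto (fun c : ℝ => convEnv1 f g c t) atTop (𝓝 ((f t : ℝ) : EReal))) :
    slopeAtBot g ≤ slopeAtBot f :=
  slope_of_convEnv1_tendsto_general f g hconv

end
end
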